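/- arXiv:1807.01305 — 3 statements merged into one kernel-verified Lean document; each statement's English description precedes it below -/
import Mathlib

section
/- Let pk⁽⁰⁾, pk⁽¹⁾ ∈ (0,1) for k = 1, 2, set ORk = (pk⁽¹⁾/qk⁽¹⁾)/(pk⁽⁰⁾/qk⁽⁰⁾) where qk⁽ⁱ⁾ = 1 − pk⁽ⁱ⁾, let ρ⁽⁰⁾, ρ⁽¹⁾ be real numbers, define p*⁽ⁱ⁾ = 1 − q1⁽ⁱ⁾q2⁽ⁱ⁾ − ρ⁽ⁱ⁾√(p1⁽ⁱ⁾p2⁽ⁱ⁾q1⁽ⁱ⁾q2⁽ⁱ⁾) and q*⁽ⁱ⁾ = 1 − p*⁽ⁱ⁾, and assume p*⁽ⁱ⁾, q*⁽ⁱ⁾ ∈ (0,1) for i = 0, 1. Then the odds ratio of the composite endpoint OR* = (p*⁽¹⁾/q*⁽¹⁾)/(p*⁽⁰⁾/q*⁽⁰⁾) satisfies OR* = [ ( (1 + OR1·p1⁽⁰⁾/(1−p1⁽⁰⁾))·(1 + OR2·p2⁽⁰⁾/(1−p2⁽⁰⁾)) − 1 − ρ⁽¹⁾√( OR1·OR2·p1⁽⁰⁾p2⁽⁰⁾/((1−p1⁽⁰⁾)(1−p2⁽⁰⁾))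 ) )·( 1 + ρ⁽⁰⁾√( p1⁽⁰⁾p2⁽⁰⁾/((1−p1⁽⁰⁾)(1−p2⁽⁰⁾)) ) ) ] / [ ( (1 + p1⁽⁰⁾/(1−p1⁽⁰⁾))·(1 + p2⁽⁰⁾/(1−p2⁽⁰⁾)) − 1 − ρ⁽⁰⁾√( p1⁽⁰⁾p2⁽⁰⁾/((1−p1⁽⁰⁾)(1−p2⁽⁰⁾)) ) )·( 1 + ρ⁽¹⁾√( OR1·OR2·p1⁽⁰⁾p2⁽⁰⁾/((1−p1⁽⁰⁾)(1−p2⁽⁰⁾)) ) ) ]. -/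
/-!
Writing `o = p / (1 - p)` for odds, `1 + o = 1 / (1 - p)` and `ORₖ oₖ⁽⁰⁾ = oₖ⁽¹⁾`. Hence in each
group the factor `(1 + o₁)(1 + o₂) - 1 - ρ √(o₁ o₂)` is `p* / (q₁ q₂)` and `1 + ρ √(o₁ o₂)` is
`q* / (q₁ q₂)`; the normalisations `q₁ q₂` cancel in the quotient, leaving `OR*`.
-/

open Real

/-- The paper's `p*`: the event rate of the composite of two binary endpoints with rates `a`, `b`
and correlation `ρ`. -/
noncomputable def compositeRate (a b ρ : ℝ) : ℝ :=
  1 - (1 - a) * (1 - b) - ρ * √(a * b * (1 - a) * (1 - b))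

lemma sqrt_div_eq_sqrt_mul_div {y : ℝ} (x : ℝ) (hy : 0 < y) : √(x / y) = √(x * y) / y := by
  rw [show x / y = x * y / y ^ 2 by field_simp, sqrt_div' _ (sq_nonneg y), sqrt_sq hy.le]

section CompositeRate

variable {a b : ℝ} (ρ : ℝ)

lemma sqrt_odds_mul_odds (ha : a < 1) (hb : b < 1) :
    √(a * b / ((1 - a) * (1 - b))) = √(a * b * (1 - a) * (1 - b)) / ((1 - a) * (1 - b)) := by
  rw [sqrt_div_eq_sqrt_mul_div _ (mul_pos (sub_pos.2 ha) (sub_pos.2 hb)), ← mul_assoc]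

lemma compositeRate_eq_odds (ha : a < 1) (hb : b < 1) :
    (1 + a / (1 - a)) * (1 + b / (1 - b)) - 1 - ρ * √(a * b / ((1 - a) * (1 - b)))
      = compositeRate a b ρ / ((1 - a) * (1 - b)) := by
  have := sub_ne_zero.2 ha.ne'
  have := sub_ne_zero.2 hb.ne'
  rw [sqrt_odds_mul_odds ha hb, compositeRate]
  field_simp
  ring

lemma one_sub_compositeRate_eq_odds (ha : a < 1) (hb : b < 1) :
    1 + ρ * √(a * b / ((1 - a) * (1 - b)))
      = (1 - compositeRate a b ρ) / ((1 - a) * (1 - b)) := by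
  have := sub_ne_zero.2 ha.ne'
  have := sub_ne_zero.2 hb.ne'
  rw [sqrt_odds_mul_odds ha hb, compositeRate]
  field_simp
  ring

end CompositeRate

lemma div_div_div_eq_of_ne_zero {K : Type*} [Field K] {x y : K} (a b c d : K) (hx : x ≠ 0)
    (hy : y ≠ 0) :
    (a / x * (d / y)) / (c / y * (b / x)) = (a / b) / (c / d) := by
  field_simp

theorem composite_odds_ratio_from_margins_general
    (p1 p2 P1 P2 OR1 OR2 ρ0 ρ1 pstar0 pstar1 : ℝ)
    (hp1 : p1 ∈ Set.Ioo (0:ℝ) 1) (hp2 : p2 ∈ Set.Ioo (0:ℝ) 1)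
    (hP1 : P1 ∈ Set.Ioo (0:ℝ) 1) (hP2 : P2 ∈ Set.Ioo (0:ℝ) 1)
    (hOR1 : OR1 = (P1 / (1 - P1)) / (p1 / (1 - p1)))
    (hOR2 : OR2 = (P2 / (1 - P2)) / (p2 / (1 - p2)))
    (hpstar0 : pstar0 = 1 - (1 - p1) * (1 - p2)
        - ρ0 * Real.sqrt (p1 * p2 * (1 - p1) * (1 - p2)))
    (hpstar1 : pstar1 = 1 - (1 - P1) * (1 - P2)
        - ρ1 * Real.sqrt (P1 * P2 * (1 - P1) * (1 - P2))) :
    (pstar1 / (1 - pstar1)) / (pstar0 / (1 - pstar0))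
    = (((1 + OR1 * p1 / (1 - p1)) * (1 + OR2 * p2 / (1 - p2)) - 1
          - ρ1 * Real.sqrt (OR1 * OR2 * p1 * p2 / ((1 - p1) * (1 - p2))))
        * (1 + ρ0 * Real.sqrt (p1 * p2 / ((1 - p1) * (1 - p2)))))
      / (((1 + p1 / (1 - p1)) * (1 + p2 / (1 - p2)) - 1
          - ρ0 * Real.sqrt (p1 * p2 / ((1 - p1) * (1 - p2))))
        * (1 + ρ1 * Real.sqrt (OR1 * OR2 * p1 * p2 / ((1 - p1) * (1 - p2))))) := by
  have odds_ne_zero {p : ℝ} (hp : p ∈ Set.Ioo (0:ℝ) 1) : p / (1 - p) ≠ 0 :=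
    div_ne_zero hp.1.ne' (sub_ne_zero.2 hp.2.ne')
  have hodds1 : OR1 * p1 / (1 - p1) = P1 / (1 - P1) := by
    rw [hOR1, mul_div_assoc, div_mul_cancel₀ _ (odds_ne_zero hp1)]
  have hodds2 : OR2 * p2 / (1 - p2) = P2 / (1 - P2) := by
    rw [hOR2, mul_div_assoc, div_mul_cancel₀ _ (odds_ne_zero hp2)]
  have hodds12 :
      OR1 * OR2 * p1 * p2 / ((1 - p1) * (1 - p2)) = P1 * P2 / ((1 - P1) * (1 - P2)) :=
    calc OR1 * OR2 * p1 * p2 / ((1 - p1) * (1 - p2))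
        = OR1 * p1 / (1 - p1) * (OR2 * p2 / (1 - p2)) := by rw [div_mul_div_comm]; ring
      _ = P1 * P2 / ((1 - P1) * (1 - P2)) := by rw [hodds1, hodds2, div_mul_div_comm]
  have hrate0 : compositeRate p1 p2 ρ0 = pstar0 := hpstar0.symm
  have hrate1 : compositeRate P1 P2 ρ1 = pstar1 := hpstar1.symm
  rw [hodds1, hodds2, hodds12,
    compositeRate_eq_odds _ hP1.2 hP2.2, compositeRate_eq_odds _ hp1.2 hp2.2,
    one_sub_compositeRate_eq_odds _ hP1.2 hP2.2, one_sub_compositeRate_eq_odds _ hp1.2 hp2.2,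
    hrate0, hrate1, div_div_div_eq_of_ne_zero]
  · exact mul_ne_zero (sub_ne_zero.2 hP1.2.ne') (sub_ne_zero.2 hP2.2.ne')
  · exact mul_ne_zero (sub_ne_zero.2 hp1.2.ne') (sub_ne_zero.2 hp2.2.ne')

/-- The odds ratio of the composite endpoint expressed in terms of the marginal
event rates, the marginal odds ratios, and the correlations in each group. -/
theorem composite_odds_ratio_from_margins
    (p1 p2 P1 P2 OR1 OR2 ρ0 ρ1 pstar0 pstar1 : ℝ)
    (hp1 : p1 ∈ Set.Ioo (0:ℝ) 1) (hp2 : p2 ∈ Set.Ioo (0:ℝ) 1)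
    (hP1 : P1 ∈ Set.Ioo (0:ℝ) 1) (hP2 : P2 ∈ Set.Ioo (0:ℝ) 1)
    (hOR1 : OR1 = (P1 / (1 - P1)) / (p1 / (1 - p1)))
    (hOR2 : OR2 = (P2 / (1 - P2)) / (p2 / (1 - p2)))
    (hpstar0 : pstar0 = 1 - (1 - p1) * (1 - p2)
        - ρ0 * Real.sqrt (p1 * p2 * (1 - p1) * (1 - p2)))
    (hpstar1 : pstar1 = 1 - (1 - P1) * (1 - P2)
        - ρ1 * Real.sqrt (P1 * P2 * (1 - P1) * (1 - P2)))
    (hm0 : pstar0 ∈ Set.Ioo (0:ℝ) 1) (hm1 : pstar1 ∈ Set.Ioo (0:ℝ) 1)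
    (hm0' : 1 - pstar0 ∈ Set.Ioo (0:ℝ) 1) (hm1' : 1 - pstar1 ∈ Set.Ioo (0:ℝ) 1) :
    (pstar1 / (1 - pstar1)) / (pstar0 / (1 - pstar0))
    = (((1 + OR1 * p1 / (1 - p1)) * (1 + OR2 * p2 / (1 - p2)) - 1
          - ρ1 * Real.sqrt (OR1 * OR2 * p1 * p2 / ((1 - p1) * (1 - p2))))
        * (1 + ρ0 * Real.sqrt (p1 * p2 / ((1 - p1) * (1 - p2)))))
      / (((1 + p1 / (1 - p1)) * (1 + p2 / (1 - p2)) - 1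
          - ρ0 * Real.sqrt (p1 * p2 / ((1 - p1) * (1 - p2))))
        * (1 + ρ1 * Real.sqrt (OR1 * OR2 * p1 * p2 / ((1 - p1) * (1 - p2))))) :=
  composite_odds_ratio_from_margins_general p1 p2 P1 P2 OR1 OR2 ρ0 ρ1 pstar0 pstar1 hp1 hp2 hP1 hP2
    hOR1 hOR2 hpstar0 hpstar1
end

section
/- Let pk⁽⁰⁾ ∈ (0, 1/2) and δk < 0 with pk⁽¹⁾ = pk⁽⁰⁾ + δk ≥ 0 for k = 1, 2, write qk⁽ⁱ⁾ = 1 − pk⁽ⁱ⁾, and for a common correlation ρ define the composite risk difference δ*(ρ) = δ1·q2⁽⁰⁾ + δ2·q1⁽⁰⁾ − δ1·δ2 + ρ·( √(p1⁽⁰⁾p2⁽⁰⁾q1⁽⁰⁾q2⁽⁰⁾) − √(p1⁽¹⁾p2⁽¹⁾q1⁽¹⁾q2⁽¹⁾) ). Then δ* is a strictly increasing function of ρ: for all real ρ < ρ′, δ*(ρ) < δ*(ρ′). -/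
/-! The correlation enters `δ*(ρ)` only through the slope `√(p₁⁽⁰⁾p₂⁽⁰⁾q₁⁽⁰⁾q₂⁽⁰⁾) − √(p₁⁽¹⁾p₂⁽¹⁾q₁⁽¹⁾q₂⁽¹⁾)`.
Since the Bernoulli variance `x(1 − x)` is strictly increasing on `(-∞, 1/2]` and nonnegative on
`[0, 1]`, lowering both event rates below `1/2` strictly lowers the product of the variances, so the
slope is positive. -/

open Real

theorem strictMonoOn_mul_one_sub : StrictMonoOn (fun x : ℝ => x * (1 - x)) (Set.Iic (1 / 2)) := by
  intro a ha b hb hab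
  have hsum : a + b < 1 := by linarith [Set.mem_Iic.1 hb]
  have hdiff : b * (1 - b) - a * (1 - a) = (b - a) * (1 - (a + b)) := by ring
  have : 0 < (b - a) * (1 - (a + b)) := mul_pos (by linarith) (by linarith)
  simp only
  linarith

theorem mul_one_sub_nonneg {x : ℝ} (h0 : 0 ≤ x) (h1 : x ≤ 1) : 0 ≤ x * (1 - x) :=
  mul_nonneg h0 (sub_nonneg.2 h1)

theorem sqrt_variance_product_lt_of_lt {a1 a2 p1 p2 : ℝ} (ha1 : 0 ≤ a1) (ha2 : 0 ≤ a2)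
    (h1 : a1 < p1) (h2 : a2 < p2) (hp1 : p1 ≤ 1 / 2) (hp2 : p2 ≤ 1 / 2) :
    √(a1 * a2 * (1 - a1) * (1 - a2)) < √(p1 * p2 * (1 - p1) * (1 - p2)) := by
  have hv1 : a1 * (1 - a1) < p1 * (1 - p1) :=
    strictMonoOn_mul_one_sub (h1.le.trans hp1) hp1 h1
  have hv2 : a2 * (1 - a2) < p2 * (1 - p2) :=
    strictMonoOn_mul_one_sub (h2.le.trans hp2) hp2 h2
  have hw1 := mul_one_sub_nonneg ha1 (by linarith)
  have hw2 := mul_one_sub_nonneg ha2 (by linarith)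
  have hprod := mul_lt_mul'' hv1 hv2 hw1 hw2
  have hregroup : ∀ x y : ℝ, x * y * (1 - x) * (1 - y) = x * (1 - x) * (y * (1 - y)) := by
    intro x y; ring
  rw [hregroup, hregroup]
  exact Real.sqrt_lt_sqrt (mul_nonneg hw1 hw2) hprod

/-- The composite risk difference `δ*(ρ)` is a strictly increasing function of the
correlation `ρ`, provided the control-group event rates are below `1/2` and the
marginal risk differences are negative. -/
theorem composite_risk_difference_strictMono_in_correlation
    (p1 p2 δ1 δ2 : ℝ)
    (hp1 : p1 ∈ Set.Ioo (0:ℝ) (1/2)) (hp2 : p2 ∈ Set.Ioo (0:ℝ) (1/2))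
    (hδ1 : δ1 < 0) (hδ2 : δ2 < 0)
    (hp1' : 0 ≤ p1 + δ1) (hp2' : 0 ≤ p2 + δ2) :
    ∀ ρ ρ' : ℝ, ρ < ρ' →
      (δ1 * (1 - p2) + δ2 * (1 - p1) - δ1 * δ2
          + ρ * (Real.sqrt (p1 * p2 * (1 - p1) * (1 - p2))
              - Real.sqrt ((p1 + δ1) * (p2 + δ2) * (1 - (p1 + δ1)) * (1 - (p2 + δ2)))))
      < (δ1 * (1 - p2) + δ2 * (1 - p1) - δ1 * δ2
          + ρ' * (Real.sqrt (p1 * p2 * (1 - p1) * (1 - p2))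
              - Real.sqrt ((p1 + δ1) * (p2 + δ2) * (1 - (p1 + δ1)) * (1 - (p2 + δ2))))) := by
  intro ρ ρ' hρ
  have hslope : 0 < Real.sqrt (p1 * p2 * (1 - p1) * (1 - p2))
      - Real.sqrt ((p1 + δ1) * (p2 + δ2) * (1 - (p1 + δ1)) * (1 - (p2 + δ2))) :=
    sub_pos.2 <| sqrt_variance_product_lt_of_lt hp1' hp2' (by linarith) (by linarith)
      hp1.2.le hp2.2.le
  exact add_lt_add_right (mul_lt_mul_of_pos_right hρ hslope) _
end

section
/- Let zα, zβ be real numbers with zα + zβ > 0, let p ∈ (0, 1/2), and define N(p, d) = ((zα + zβ)/d)² · ( p(1−p) + (p+d)(1−p−d) ). Then N(p, d) is strictly increasing in d on (−p, 0): for all −p < d < d′ < 0, N(p, d) < N(p, d′). -/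
/-!
Substituting `s = 1/d` turns `N(p, d)` into `(zα + zβ)² · q(s)` for the quadratic
`q(s) = 2p(1−p)s² + (1−2p)s − 1`. As `d` increases through `(−p, 0)`, `s` decreases through
`(−∞, −1/p)`, which lies to the left of the vertex of `q` because `p < 1`; there `q` is decreasing.
-/

/-- `N(p, d) / (zα + zβ)²` as a function of `s = 1/d`. -/
def normalizedSampleSize (p s : ℝ) : ℝ :=
  2 * p * (1 - p) * s ^ 2 + (1 - 2 * p) * s - 1

theorem sampleSize_eq_mul_normalizedSampleSize (z p : ℝ) {d : ℝ} (hd : d ≠ 0) :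
    (z / d) ^ 2 * (p * (1 - p) + (p + d) * (1 - p - d))
      = z ^ 2 * normalizedSampleSize p d⁻¹ := by
  unfold normalizedSampleSize
  field_simp
  ring

theorem normalizedSampleSize_strictAntiOn {p : ℝ} (hp0 : 0 < p) (hp1 : p < 1) :
    StrictAntiOn (normalizedSampleSize p) (Set.Iio (-p⁻¹)) := by
  intro s hs s' hs' hss'
  have hsum : s + s' < -2 * p⁻¹ := by linarith [Set.mem_Iio.1 hs, Set.mem_Iio.1 hs']
  have hslope : 2 * p * (1 - p) * (s + s') + (1 - 2 * p) < 0 := by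
    have hpp : 0 < 2 * p * (1 - p) := by nlinarith
    calc 2 * p * (1 - p) * (s + s') + (1 - 2 * p)
        < 2 * p * (1 - p) * (-2 * p⁻¹) + (1 - 2 * p) := by gcongr
      _ = 2 * p - 3 := by field_simp; ring
      _ < 0 := by linarith
  have hdiff : normalizedSampleSize p s' - normalizedSampleSize p s
      = (s' - s) * (2 * p * (1 - p) * (s + s') + (1 - 2 * p)) := by
    unfold normalizedSampleSize; ring
  linarith [mul_neg_of_pos_of_neg (sub_pos.2 hss') hslope]

/-- The unpooled-variance sample size function
`N(p,d) = ((zα+zβ)/d)² (p(1−p) + (p+d)(1−p−d))` is strictly increasing in the risk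
difference `d` on `(−p, 0)`, for a fixed control-group event rate `p ∈ (0, 1/2)`. -/
theorem sample_size_strictMono_in_effect
    (za zb p : ℝ) (hz : 0 < za + zb) (hp : p ∈ Set.Ioo (0:ℝ) (1/2)) :
    ∀ d d' : ℝ, -p < d → d < d' → d' < 0 →
      ((za + zb) / d) ^ 2 * (p * (1 - p) + (p + d) * (1 - p - d))
        < ((za + zb) / d') ^ 2 * (p * (1 - p) + (p + d') * (1 - p - d')) := by
  intro d d' hd hdd' hd'
  obtain ⟨hp0, hp_half⟩ := hp
  have hd0 : d < 0 := hdd'.trans hd'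
  have hinv : d'⁻¹ < d⁻¹ := (inv_lt_inv_of_neg hd' hd0).2 hdd'
  have hinv_lt : d⁻¹ < -p⁻¹ := by
    rwa [← inv_neg, inv_lt_inv_of_neg hd0 (neg_neg_of_pos hp0)]
  rw [sampleSize_eq_mul_normalizedSampleSize _ _ hd0.ne,
    sampleSize_eq_mul_normalizedSampleSize _ _ hd'.ne]
  refine mul_lt_mul_of_pos_left ?_ (pow_pos hz 2)
  exact normalizedSampleSize_strictAntiOn hp0 (by linarith)
    (hinv.trans hinv_lt) hinv_lt hinv
end
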